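/- arXiv:2503.00400 — 5 statements merged into one kernel-verified Lean document; each statement's English description precedes it below -/
import Mathlib

section
/- Let v, n be unit vectors in R³ with v ≠ −n, and let m = (v+n)/‖v+n‖. Then the function h₂(u) = (u·n)(u·v) − n·v on the unit sphere attains its maximum at u = m and at u = −m, with maximum value max h₂ = ((1+n·v)/2) − n·v = (1 − n·v)/2. -/
open Matrix Real

noncomputable def norm3 (v : Fin 3 → ℝ) : ℝ := Real.sqrt (v ⬝ᵥ v)

/-- for unit `v, n` with `v ≠ −n` and `m = (v+n)/‖v+n‖`,
`h₂(u) = (u·n)(u·v) − n·v` attains its maximum `(1 − n·v)/2` over the unit sphere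
at `u = m` and at `u = −m`. -/
theorem stmt3 (v n : Fin 3 → ℝ) (hv : v ⬝ᵥ v = 1) (hn : n ⬝ᵥ n = 1)
    (hvn : v ≠ -n) :
    let m : Fin 3 → ℝ := (norm3 (v + n))⁻¹ • (v + n)
    (∀ u : Fin 3 → ℝ, u ⬝ᵥ u = 1 →
      (u ⬝ᵥ n) * (u ⬝ᵥ v) - n ⬝ᵥ v ≤ (1 - n ⬝ᵥ v) / 2) ∧
    (m ⬝ᵥ n) * (m ⬝ᵥ v) - n ⬝ᵥ v = (1 - n ⬝ᵥ v) / 2 ∧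
    ((-m) ⬝ᵥ n) * ((-m) ⬝ᵥ v) - n ⬝ᵥ v = (1 - n ⬝ᵥ v) / 2 := by
  intro m
  have hs : v + n ≠ 0 := fun h => hvn (eq_neg_of_add_eq_zero_left h)
  have hS : (v + n) ⬝ᵥ (v + n) > 0 := by
    have hne : (v + n) ⬝ᵥ (v + n) ≠ 0 := fun h => hs (dotProduct_self_eq_zero.mp h)
    have hnn : 0 ≤ (v + n) ⬝ᵥ (v + n) := by
      simp only [dotProduct, Fin.sum_univ_three, Pi.add_apply]
      nlinarith [mul_self_nonneg (v 0 + n 0), mul_self_nonneg (v 1 + n 1), mul_self_nonneg (v 2 + n 2)]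
    exact lt_of_le_of_ne hnn (Ne.symm hne)
  have hSS : (v + n) ⬝ᵥ (v + n) = 2 + 2 * (n ⬝ᵥ v) := by
    rw [add_dotProduct, dotProduct_add, dotProduct_add, hv, hn, dotProduct_comm v n]
    ring
  have hcv : n ⬝ᵥ v > -1 := by rw [hSS] at hS; linarith
  have hpos : 0 < norm3 (v + n) := Real.sqrt_pos.mpr hS
  have hnz : norm3 (v + n) ≠ 0 := ne_of_gt hpos
  have hsq : norm3 (v + n) * norm3 (v + n) = 2 + 2 * (n ⬝ᵥ v) := by
    rw [← hSS]; exact Real.mul_self_sqrt hS.le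
  set N := norm3 (v + n) with hN
  set c := n ⬝ᵥ v with hc
  have hmn : m ⬝ᵥ n = N⁻¹ * (1 + c) := by
    show (N⁻¹ • (v + n)) ⬝ᵥ n = _
    rw [smul_dotProduct, add_dotProduct, hn, dotProduct_comm v n, smul_eq_mul]
    ring
  have hmv : m ⬝ᵥ v = N⁻¹ * (1 + c) := by
    show (N⁻¹ • (v + n)) ⬝ᵥ v = _
    rw [smul_dotProduct, add_dotProduct, hv, smul_eq_mul]
  have key : (m ⬝ᵥ n) * (m ⬝ᵥ v) - c = (1 - c) / 2 := by
    rw [hmn, hmv]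
    have h2 : (2 : ℝ) + 2 * c ≠ 0 := by linarith
    field_simp
    nlinarith [hsq]
  refine ⟨?_, key, by rw [neg_dotProduct, neg_dotProduct, neg_mul_neg]; exact key⟩
  intro u hu
  have cs : (u ⬝ᵥ (n + v)) ^ 2 ≤ (u ⬝ᵥ u) * ((n + v) ⬝ᵥ (n + v)) := by
    simp only [dotProduct, Fin.sum_univ_three, Pi.add_apply]
    nlinarith [sq_nonneg (u 0 * (n 1 + v 1) - u 1 * (n 0 + v 0)),
      sq_nonneg (u 0 * (n 2 + v 2) - u 2 * (n 0 + v 0)),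
      sq_nonneg (u 1 * (n 2 + v 2) - u 2 * (n 1 + v 1))]
  rw [hu, one_mul] at cs
  have h1 : (n + v) ⬝ᵥ (n + v) = 2 + 2 * c := by
    rw [add_dotProduct, dotProduct_add, dotProduct_add, hv, hn, dotProduct_comm v n]
    ring
  have h2 : u ⬝ᵥ (n + v) = u ⬝ᵥ n + u ⬝ᵥ v := dotProduct_add u n v
  rw [h1, h2] at cs
  nlinarith [sq_nonneg (u ⬝ᵥ n - u ⬝ᵥ v)]
end

section
/- Let v, n be unit vectors in R³ with v ≠ n, and let m⊥ = (v−n)/‖v−n‖. Then the function h₂(u) = (u·n)(u·v) − n·v on the unit sphere attains its minimum at u = ±m⊥, with minimum value −(1 + n·v)/2. -/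
open Matrix Real

/-!
Polarization gives `4 (u·n)(u·v) = (u·(v+n))² − (u·(v−n))²`. On the unit sphere the first square
is at least `0` and, by Cauchy–Schwarz, the second is at most `‖v−n‖² = 2 − 2 n·v`; both bounds are
attained at `u = ±(v−n)/‖v−n‖`, which is orthogonal to `v + n` because `‖v‖ = ‖n‖`.
-/

namespace Matrix

variable {ι R : Type*} [Fintype ι]

theorem four_mul_dotProduct_mul_dotProduct [CommRing R] (u v n : ι → R) :
    4 * ((u ⬝ᵥ n) * (u ⬝ᵥ v)) = (u ⬝ᵥ (v + n)) ^ 2 - (u ⬝ᵥ (v - n)) ^ 2 := by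
  rw [dotProduct_add, dotProduct_sub]
  ring

theorem sub_dotProduct_sub_of_dotProduct_self_eq_one [CommRing R] {v n : ι → R}
    (hv : v ⬝ᵥ v = 1) (hn : n ⬝ᵥ n = 1) : (v - n) ⬝ᵥ (v - n) = 2 - 2 * (n ⬝ᵥ v) := by
  simp only [sub_dotProduct, dotProduct_sub, hv, hn, dotProduct_comm v n]
  ring

theorem sq_dotProduct_le [CommRing R] [LinearOrder R] [IsStrictOrderedRing R] (u w : ι → R) :
    (u ⬝ᵥ w) ^ 2 ≤ (u ⬝ᵥ u) * (w ⬝ᵥ w) := by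
  simpa only [dotProduct, sq] using Finset.sum_mul_sq_le_sq_mul_sq Finset.univ u w

theorem neg_dotProduct_sub_le_four_mul_dotProduct_mul_dotProduct [CommRing R] [LinearOrder R]
    [IsStrictOrderedRing R] {u : ι → R} (hu : u ⬝ᵥ u = 1) (v n : ι → R) :
    -((v - n) ⬝ᵥ (v - n)) ≤ 4 * ((u ⬝ᵥ n) * (u ⬝ᵥ v)) := by
  have h := sq_dotProduct_le u (v - n)
  rw [hu, one_mul] at h
  rw [four_mul_dotProduct_mul_dotProduct]
  nlinarith [sq_nonneg (u ⬝ᵥ (v + n))]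

theorem four_mul_dotProduct_mul_dotProduct_normalize {v n : ι → ℝ} (hvn : v ⬝ᵥ v = n ⬝ᵥ n) :
    let m := (√((v - n) ⬝ᵥ (v - n)))⁻¹ • (v - n)
    4 * ((m ⬝ᵥ n) * (m ⬝ᵥ v)) = -((v - n) ⬝ᵥ (v - n)) := by
  intro m
  set d := v - n
  have horth : m ⬝ᵥ (v + n) = 0 := by
    have : d ⬝ᵥ (v + n) = 0 := by
      rw [sub_dotProduct, dotProduct_add, dotProduct_add, hvn, dotProduct_comm v n]
      ring
    rw [smul_dotProduct, this, smul_zero]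
  have hpar : (m ⬝ᵥ d) ^ 2 = d ⬝ᵥ d := by
    have hd : 0 ≤ d ⬝ᵥ d := Finset.sum_nonneg fun i _ => mul_self_nonneg (d i)
    rw [smul_dotProduct, smul_eq_mul, mul_pow, inv_pow, sq_sqrt hd, sq, ← mul_assoc,
      inv_mul_mul_self]
  rw [four_mul_dotProduct_mul_dotProduct, horth, hpar]
  ring

end Matrix

theorem stmt4_general (v n : Fin 3 → ℝ) (hv : v ⬝ᵥ v = 1) (hn : n ⬝ᵥ n = 1) :
    let mp : Fin 3 → ℝ := (norm3 (v - n))⁻¹ • (v - n)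
    (∀ u : Fin 3 → ℝ, u ⬝ᵥ u = 1 →
      -(1 + n ⬝ᵥ v) / 2 ≤ (u ⬝ᵥ n) * (u ⬝ᵥ v) - n ⬝ᵥ v) ∧
    (mp ⬝ᵥ n) * (mp ⬝ᵥ v) - n ⬝ᵥ v = -(1 + n ⬝ᵥ v) / 2 ∧
    ((-mp) ⬝ᵥ n) * ((-mp) ⬝ᵥ v) - n ⬝ᵥ v = -(1 + n ⬝ᵥ v) / 2 := by
  intro mp
  have hd := sub_dotProduct_sub_of_dotProduct_self_eq_one hv hn
  have hmp : 4 * ((mp ⬝ᵥ n) * (mp ⬝ᵥ v)) = -((v - n) ⬝ᵥ (v - n)) :=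
    four_mul_dotProduct_mul_dotProduct_normalize (hv.trans hn.symm)
  refine ⟨fun u hu => ?_, by linarith, ?_⟩
  · linarith [neg_dotProduct_sub_le_four_mul_dotProduct_mul_dotProduct hu v n]
  · rw [neg_dotProduct, neg_dotProduct, neg_mul_neg]
    linarith

/-- for unit `v, n` with `v ≠ n` and `m⊥ = (v−n)/‖v−n‖`,
`h₂(u) = (u·n)(u·v) − n·v` attains its minimum `−(1 + n·v)/2` over the unit sphere
at `u = ±m⊥`. -/
theorem stmt4 (v n : Fin 3 → ℝ) (hv : v ⬝ᵥ v = 1) (hn : n ⬝ᵥ n = 1)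
    (hvn : v ≠ n) :
    let mp : Fin 3 → ℝ := (norm3 (v - n))⁻¹ • (v - n)
    (∀ u : Fin 3 → ℝ, u ⬝ᵥ u = 1 →
      -(1 + n ⬝ᵥ v) / 2 ≤ (u ⬝ᵥ n) * (u ⬝ᵥ v) - n ⬝ᵥ v) ∧
    (mp ⬝ᵥ n) * (mp ⬝ᵥ v) - n ⬝ᵥ v = -(1 + n ⬝ᵥ v) / 2 ∧
    ((-mp) ⬝ᵥ n) * ((-mp) ⬝ᵥ v) - n ⬝ᵥ v = -(1 + n ⬝ᵥ v) / 2 :=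
  stmt4_general v n hv hn
end

section
/- For unit vectors v, n in R³ and all unit vectors u, one has −(1 + n·v)/2 ≤ (u·n)(u·v) − n·v ≤ (1 − n·v)/2. -/
/-!
Polarize: `4 (u·n)(u·v) = (u·(n+v))² − (u·(n−v))²`. By Cauchy–Schwarz, `(u·(n±v))² ≤ |n±v|² = 2 ± 2 n·v`,
so dropping one of the two squares gives `−2(1 − n·v) ≤ 4 (u·n)(u·v) ≤ 2(1 + n·v)`.
-/

open Matrix

section DotProduct

variable {ι R : Type*} [Fintype ι] [CommRing R]

theorem Matrix.add_dotProduct_add_self (n v : ι → R) :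
    (n + v) ⬝ᵥ (n + v) = n ⬝ᵥ n + 2 * (n ⬝ᵥ v) + v ⬝ᵥ v := by
  rw [add_dotProduct, dotProduct_add, dotProduct_add, dotProduct_comm v n]
  ring

theorem Matrix.sub_dotProduct_sub_self (n v : ι → R) :
    (n - v) ⬝ᵥ (n - v) = n ⬝ᵥ n - 2 * (n ⬝ᵥ v) + v ⬝ᵥ v := by
  rw [sub_dotProduct, dotProduct_sub, dotProduct_sub, dotProduct_comm v n]
  ring

variable [LinearOrder R] [IsStrictOrderedRing R]

theorem Matrix.sq_dotProduct_le_dotProduct_self_mul (u w : ι → R) :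
    (u ⬝ᵥ w) ^ 2 ≤ (u ⬝ᵥ u) * (w ⬝ᵥ w) := by
  simpa only [dotProduct, sq] using Finset.sum_mul_sq_le_sq_mul_sq Finset.univ u w

theorem Matrix.sq_dotProduct_le_of_dotProduct_self_eq_one {u : ι → R} (hu : u ⬝ᵥ u = 1)
    (w : ι → R) : (u ⬝ᵥ w) ^ 2 ≤ w ⬝ᵥ w := by
  simpa only [hu, one_mul] using sq_dotProduct_le_dotProduct_self_mul u w

end DotProduct

/-- for unit vectors `u, v, n` in ℝ³,
`−(1 + n·v)/2 ≤ (u·n)(u·v) − n·v ≤ (1 − n·v)/2`. -/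
theorem stmt5 (u v n : Fin 3 → ℝ) (hu : u ⬝ᵥ u = 1) (hv : v ⬝ᵥ v = 1)
    (hn : n ⬝ᵥ n = 1) :
    -(1 + n ⬝ᵥ v) / 2 ≤ (u ⬝ᵥ n) * (u ⬝ᵥ v) - n ⬝ᵥ v ∧
    (u ⬝ᵥ n) * (u ⬝ᵥ v) - n ⬝ᵥ v ≤ (1 - n ⬝ᵥ v) / 2 := by
  have h_add : (u ⬝ᵥ n + u ⬝ᵥ v) ^ 2 ≤ 2 + 2 * (n ⬝ᵥ v) := by
    have := sq_dotProduct_le_of_dotProduct_self_eq_one hu (n + v)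
    rw [dotProduct_add, add_dotProduct_add_self, hn, hv] at this
    linarith
  have h_sub : (u ⬝ᵥ n - u ⬝ᵥ v) ^ 2 ≤ 2 - 2 * (n ⬝ᵥ v) := by
    have := sq_dotProduct_le_of_dotProduct_self_eq_one hu (n - v)
    rw [dotProduct_sub, sub_dotProduct_sub_self, hn, hv] at this
    linarith
  have polarization :
      4 * ((u ⬝ᵥ n) * (u ⬝ᵥ v)) = (u ⬝ᵥ n + u ⬝ᵥ v) ^ 2 - (u ⬝ᵥ n - u ⬝ᵥ v) ^ 2 := by
    ring
  constructor <;> linarith [sq_nonneg (u ⬝ᵥ n + u ⬝ᵥ v), sq_nonneg (u ⬝ᵥ n - u ⬝ᵥ v)]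
end

section
/- Let v, n be unit vectors in R³ with v × n ≠ 0 and let c = (v×n)/‖v×n‖ have polar coordinates (α_k, φ_k), α_k ∈ (0,π). Suppose the rectangle C = [α_l, α_r] × [φ_l, φ_r] ⊆ (0,π) × [0,π] (with φ_k ∈ [0,π]) does not contain (α_k, φ_k). If (α_max, φ_max) maximizes (α,φ) ↦ sin α_k sin α cos(φ_k−φ) + cos α_k cos α over C, then φ_max = argmin_{φ ∈ [φ_l, φ_r]} |φ − φ_k|. -/
open Matrix Real

theorem Real.abs_le_abs_of_cos_le_cos {x y : ℝ} (hx : |x| ≤ π) (hy : |y| ≤ π)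
    (h : cos x ≤ cos y) : |y| ≤ |x| := by
  rw [← cos_abs x, ← cos_abs y] at h
  exact (strictAntiOn_cos.le_iff_ge ⟨abs_nonneg x, hx⟩ ⟨abs_nonneg y, hy⟩).1 h

theorem stmt14_general
    (αk φk αl αr φl φr αmax φmax : ℝ)
    (hαk : αk ∈ Set.Ioo 0 π) (hφk : φk ∈ Set.Icc 0 π)
    (hαl : 0 < αl) (hαr : αr < π)
    (hφl : 0 ≤ φl) (hφr : φr ≤ π)
    (hmem : αmax ∈ Set.Icc αl αr ∧ φmax ∈ Set.Icc φl φr)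
    (hmax : ∀ α ∈ Set.Icc αl αr, ∀ φ ∈ Set.Icc φl φr,
      Real.sin αk * Real.sin α * Real.cos (φk - φ) + Real.cos αk * Real.cos α ≤
        Real.sin αk * Real.sin αmax * Real.cos (φk - φmax) + Real.cos αk * Real.cos αmax) :
    ∀ φ ∈ Set.Icc φl φr, |φmax - φk| ≤ |φ - φk| := by
  obtain ⟨hα, hφmax⟩ := hmem
  have dist_le_pi {φ : ℝ} (hφ : φ ∈ Set.Icc φl φr) : |φk - φ| ≤ π :=
    abs_sub_le_of_nonneg_of_le hφk.1 hφk.2 (hφl.trans hφ.1) (hφ.2.trans hφr)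
  intro φ hφ
  -- compare with the competitor `(αmax, φ)`: only the factor `cos (φk - φ)` changes
  have hcoef : 0 < sin αk * sin αmax :=
    mul_pos (sin_pos_of_pos_of_lt_pi hαk.1 hαk.2)
      (sin_pos_of_pos_of_lt_pi (hαl.trans_le hα.1) (hα.2.trans_lt hαr))
  have hcos : cos (φk - φ) ≤ cos (φk - φmax) :=
    le_of_mul_le_mul_left (by linarith [hmax αmax hα φ hφ]) hcoef
  rw [abs_sub_comm φmax, abs_sub_comm φ]
  exact abs_le_abs_of_cos_le_cos (dist_le_pi hφ) (dist_le_pi hφmax) hcos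

/-- with `c = (v×n)/‖v×n‖` of polar coordinates `(α_k, φ_k)`, if the
rectangle `[α_l,α_r]×[φ_l,φ_r] ⊆ (0,π)×[0,π]` does not contain `(α_k,φ_k)`, then any
maximizer `(α_max, φ_max)` of `(α,φ) ↦ sin α_k sin α cos(φ_k−φ) + cos α_k cos α` over the
rectangle has `φ_max` equal to the point of `[φ_l,φ_r]` closest to `φ_k`. -/
theorem stmt14 (v n : Fin 3 → ℝ) (hv : v ⬝ᵥ v = 1) (hn : n ⬝ᵥ n = 1)
    (hvn : v ⨯₃ n ≠ 0)
    (αk φk αl αr φl φr αmax φmax : ℝ)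
    (hαk : αk ∈ Set.Ioo 0 π) (hφk : φk ∈ Set.Icc 0 π)
    (hc : (norm3 (v ⨯₃ n))⁻¹ • (v ⨯₃ n) =
      ![Real.sin αk * Real.cos φk, Real.sin αk * Real.sin φk, Real.cos αk])
    (hαl : 0 < αl) (hαlr : αl ≤ αr) (hαr : αr < π)
    (hφl : 0 ≤ φl) (hφlr : φl ≤ φr) (hφr : φr ≤ π)
    (hnotin : ¬(αk ∈ Set.Icc αl αr ∧ φk ∈ Set.Icc φl φr))
    (hmem : αmax ∈ Set.Icc αl αr ∧ φmax ∈ Set.Icc φl φr)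
    (hmax : ∀ α ∈ Set.Icc αl αr, ∀ φ ∈ Set.Icc φl φr,
      Real.sin αk * Real.sin α * Real.cos (φk - φ) + Real.cos αk * Real.cos α ≤
        Real.sin αk * Real.sin αmax * Real.cos (φk - φmax) + Real.cos αk * Real.cos αmax) :
    ∀ φ ∈ Set.Icc φl φr, |φmax - φk| ≤ |φ - φk| :=
  stmt14_general αk φk αl αr φl φr αmax φmax hαk hφk hαl hαr hφl hφr hmem hmax
end

section
/- Under the same setting, if (α_min, φ_min) minimizes (α,φ) ↦ sin α_k sin α cos(φ_k−φ) + cos α_k cos α over the rectangle C = [α_l, α_r] × [φ_l, φ_r] ⊆ (0,π) × [0,π], then φ_min = argmax_{φ ∈ [φ_l, φ_r]} |φ − φ_k|. -/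
open Matrix Real

lemma abs_sub_mem_Icc_zero_pi {x y : ℝ} (hx : x ∈ Set.Icc 0 π) (hy : y ∈ Set.Icc 0 π) :
    |x - y| ∈ Set.Icc 0 π :=
  ⟨abs_nonneg _, abs_sub_le_iff.2 ⟨by linarith [hx.2, hy.1], by linarith [hx.1, hy.2]⟩⟩

lemma abs_sub_le_abs_sub_of_cos_sub_le {x a b : ℝ} (hx : x ∈ Set.Icc 0 π)
    (ha : a ∈ Set.Icc 0 π) (hb : b ∈ Set.Icc 0 π) (h : cos (x - a) ≤ cos (x - b)) :
    |b - x| ≤ |a - x| := by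
  rw [← cos_abs (x - a), ← cos_abs (x - b)] at h
  rw [abs_sub_comm b, abs_sub_comm a]
  exact (strictAntiOn_cos.le_iff_ge (abs_sub_mem_Icc_zero_pi hx ha)
    (abs_sub_mem_Icc_zero_pi hx hb)).1 h

theorem stmt15_general
    (αk φk αl αr φl φr αmin φmin : ℝ)
    (hαk : αk ∈ Set.Ioo 0 π) (hφk : φk ∈ Set.Icc 0 π)
    (hαl : 0 < αl) (hαr : αr < π)
    (hφl : 0 ≤ φl) (hφr : φr ≤ π)
    (hmem : αmin ∈ Set.Icc αl αr ∧ φmin ∈ Set.Icc φl φr)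
    (hmin : ∀ α ∈ Set.Icc αl αr, ∀ φ ∈ Set.Icc φl φr,
      Real.sin αk * Real.sin αmin * Real.cos (φk - φmin) + Real.cos αk * Real.cos αmin ≤
        Real.sin αk * Real.sin α * Real.cos (φk - φ) + Real.cos αk * Real.cos α) :
    ∀ φ ∈ Set.Icc φl φr, |φ - φk| ≤ |φmin - φk| := by
  intro φ hφ
  obtain ⟨hαmin, hφmin⟩ := hmem
  have hsin : 0 < sin αk * sin αmin :=
    mul_pos (sin_pos_of_pos_of_lt_pi hαk.1 hαk.2)
      (sin_pos_of_pos_of_lt_pi (hαl.trans_le hαmin.1) (hαmin.2.trans_lt hαr))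
  have hcos : cos (φk - φmin) ≤ cos (φk - φ) :=
    le_of_mul_le_mul_left (by linarith [hmin αmin hαmin φ hφ]) hsin
  exact abs_sub_le_abs_sub_of_cos_sub_le hφk ⟨hφl.trans hφmin.1, hφmin.2.trans hφr⟩
    ⟨hφl.trans hφ.1, hφ.2.trans hφr⟩ hcos

/-- under the same setting as Statement 14, any minimizer
`(α_min, φ_min)` of `(α,φ) ↦ sin α_k sin α cos(φ_k−φ) + cos α_k cos α` over the
rectangle has `φ_min` equal to the point of `[φ_l,φ_r]` farthest from `φ_k`. -/
theorem stmt15 (v n : Fin 3 → ℝ) (hv : v ⬝ᵥ v = 1) (hn : n ⬝ᵥ n = 1)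
    (hvn : v ⨯₃ n ≠ 0)
    (αk φk αl αr φl φr αmin φmin : ℝ)
    (hαk : αk ∈ Set.Ioo 0 π) (hφk : φk ∈ Set.Icc 0 π)
    (hc : (norm3 (v ⨯₃ n))⁻¹ • (v ⨯₃ n) =
      ![Real.sin αk * Real.cos φk, Real.sin αk * Real.sin φk, Real.cos αk])
    (hαl : 0 < αl) (hαlr : αl ≤ αr) (hαr : αr < π)
    (hφl : 0 ≤ φl) (hφlr : φl ≤ φr) (hφr : φr ≤ π)
    (hnotin : ¬(αk ∈ Set.Icc αl αr ∧ φk ∈ Set.Icc φl φr))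
    (hmem : αmin ∈ Set.Icc αl αr ∧ φmin ∈ Set.Icc φl φr)
    (hmin : ∀ α ∈ Set.Icc αl αr, ∀ φ ∈ Set.Icc φl φr,
      Real.sin αk * Real.sin αmin * Real.cos (φk - φmin) + Real.cos αk * Real.cos αmin ≤
        Real.sin αk * Real.sin α * Real.cos (φk - φ) + Real.cos αk * Real.cos α) :
    ∀ φ ∈ Set.Icc φl φr, |φ - φk| ≤ |φmin - φk| :=
  stmt15_general αk φk αl αr φl φr αmin φmin hαk hφk hαl hαr hφl hφr hmem hmin
end
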